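/- arXiv:2001.00687 — 2 statements merged into one kernel-verified Lean document; each statement's English description precedes it below -/
import Mathlib

section
/- Let α ∈ [0, π/2) and let A, B ∈ M_n(ℂ) be sector matrices of angle α. Then the harmonic mean of |det A| and |det B| satisfies 2·|det A|·|det B|/(|det A| + |det B|) ≤ sec^{n}(α) · (2·det(Re A)·det(Re B)/(det(Re A) + det(Re B))), i.e., the harmonic mean of |det A| and |det B| is at most sec^n(α) times the harmonic mean of det(Re A) and det(Re B). -/
/-
Write `A = H + iK` with `H = Re A` positive definite and `K = Im A` Hermitian. Then
`A = H^{1/2} (1 + iS) H^{1/2}` with `S = H^{-1/2} K H^{-1/2}` Hermitian, so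
`|det A| = det H · ∏ |1 + iλⱼ| = det H · ∏ √(1 + λⱼ²)` over the eigenvalues `λⱼ` of `S`. The sector
condition `|x*Kx| ≤ tan α · x*Hx`, read through the congruence by `H^{-1/2}`, gives `|λⱼ| ≤ tan α`,
hence `|det A| ≤ secⁿ α · det (Re A)`. The harmonic mean is monotone and positively homogeneous.
-/

open Matrix Complex
open scoped ComplexOrder

noncomputable def matRe {n : ℕ} (A : Matrix (Fin n) (Fin n) ℂ) : Matrix (Fin n) (Fin n) ℂ :=
  (2⁻¹ : ℂ) • (A + Aᴴ)

/-- `A` is a sector matrix of angle `α`: its numerical range lies in `S_α`. -/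
def InSector {n : ℕ} (α : ℝ) (A : Matrix (Fin n) (Fin n) ℂ) : Prop :=
  ∀ x : Fin n → ℂ, star x ⬝ᵥ x = 1 →
    0 < (star x ⬝ᵥ A *ᵥ x).re ∧
      |(star x ⬝ᵥ A *ᵥ x).im| ≤ Real.tan α * (star x ⬝ᵥ A *ᵥ x).re

section

variable {ι : Type*} [Fintype ι]

theorem Matrix.star_dotProduct_conjTranspose_mulVec (A : Matrix ι ι ℂ) (x : ι → ℂ) :
    star x ⬝ᵥ Aᴴ *ᵥ x = star (star x ⬝ᵥ A *ᵥ x) := by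
  rw [star_dotProduct, star_mulVec, conjTranspose_conjTranspose, ← dotProduct_mulVec]

theorem Matrix.star_smul_dotProduct_mulVec_smul (A : Matrix ι ι ℂ) (c : ℝ) (x : ι → ℂ) :
    star (c • x) ⬝ᵥ A *ᵥ (c • x) = (c * c) • (star x ⬝ᵥ A *ᵥ x) := by
  rw [star_smul, star_trivial, mulVec_smul, smul_dotProduct, dotProduct_smul, smul_smul]

variable [DecidableEq ι]

namespace Matrix.IsHermitian

variable {S : Matrix ι ι ℂ}

theorem abs_eigenvalues_le (hS : S.IsHermitian) {t : ℝ}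
    (h : ∀ v, |(star v ⬝ᵥ S *ᵥ v).re| ≤ t * (star v ⬝ᵥ v).re) (j : ι) :
    |hS.eigenvalues j| ≤ t := by
  have hv : star ⇑(hS.eigenvectorBasis j) ⬝ᵥ ⇑(hS.eigenvectorBasis j) = 1 := by
    rw [dotProduct_comm, ← EuclideanSpace.inner_eq_star_dotProduct, inner_self_eq_norm_sq_to_K,
      hS.eigenvectorBasis.orthonormal.1 j]
    norm_num
  simpa [hv, hS.eigenvalues_eq j] using h (hS.eigenvectorBasis j)

theorem norm_det_one_add_I_smul (hS : S.IsHermitian) :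
    ‖det (1 + I • S)‖ = ∏ j, √(1 + hS.eigenvalues j ^ 2) := by
  -- `det (1 + iS) = (-i)ⁿ χ_S(i)`, and `χ_S` splits over the real eigenvalues of `S`.
  have h : 1 + I • S = (-I) • (scalar ι I - S) := by
    rw [scalar_apply, ← smul_one_eq_diagonal, smul_sub, smul_smul, neg_mul, I_mul_I, neg_neg,
      one_smul, neg_smul, sub_neg_eq_add]
  rw [h, det_smul, ← eval_charpoly, hS.charpoly_eq, Polynomial.eval_prod, norm_mul, norm_pow,
    norm_neg, norm_I, one_pow, one_mul, norm_prod]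
  refine Finset.prod_congr rfl fun j _ => ?_
  have hI : I - (hS.eigenvalues j : ℂ) = ((-hS.eigenvalues j : ℝ) : ℂ) + (1 : ℝ) * I := by
    push_cast
    ring
  rw [Polynomial.eval_sub, Polynomial.eval_X, Polynomial.eval_C]
  change ‖I - (hS.eigenvalues j : ℂ)‖ = _
  rw [hI, norm_add_mul_I, neg_sq, one_pow, add_comm]

theorem norm_det_one_add_I_smul_le (hS : S.IsHermitian) {t : ℝ}
    (h : ∀ j, |hS.eigenvalues j| ≤ t) :
    ‖det (1 + I • S)‖ ≤ √(1 + t ^ 2) ^ Fintype.card ι := by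
  rw [hS.norm_det_one_add_I_smul]
  calc ∏ j, √(1 + hS.eigenvalues j ^ 2) ≤ ∏ _j : ι, √(1 + t ^ 2) :=
        Finset.prod_le_prod (fun _ _ => Real.sqrt_nonneg _) fun j _ =>
          Real.sqrt_le_sqrt (by simpa using sq_le_sq' (abs_le.mp (h j)).1 (abs_le.mp (h j)).2)
    _ = √(1 + t ^ 2) ^ Fintype.card ι := by simp

end Matrix.IsHermitian

open scoped MatrixOrder in
theorem Matrix.PosDef.norm_det_add_I_smul_le {H K : Matrix ι ι ℂ} (hH : H.PosDef)
    (hK : K.IsHermitian) {t : ℝ}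
    (hKH : ∀ v, |(star v ⬝ᵥ K *ᵥ v).re| ≤ t * (star v ⬝ᵥ H *ᵥ v).re) :
    ‖det (H + I • K)‖ ≤ √(1 + t ^ 2) ^ Fintype.card ι * ‖det H‖ := by
  set T := CFC.sqrt H
  have hTT : T * T = H := CFC.sqrt_mul_sqrt_self H hH.posSemidef.nonneg
  have hT : Tᴴ = T := (CFC.sqrt_nonneg H).posSemidef.isHermitian
  have hTdet : IsUnit T.det :=
    (isUnit_iff_isUnit_det T).mp ((CFC.isUnit_sqrt_iff H hH.posSemidef.nonneg).mpr hH.isUnit)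
  set R := T⁻¹
  have hTR : T * R = 1 := mul_nonsing_inv T hTdet
  have hRT : R * T = 1 := nonsing_inv_mul T hTdet
  have hR : Rᴴ = R := by rw [conjTranspose_nonsing_inv, hT]
  have hquad (M : Matrix ι ι ℂ) (v : ι → ℂ) :
      star v ⬝ᵥ (R * M * R) *ᵥ v = star (R *ᵥ v) ⬝ᵥ M *ᵥ (R *ᵥ v) := by
    rw [star_mulVec, hR, ← mulVec_mulVec, ← mulVec_mulVec, dotProduct_mulVec]
  set S := R * K * R
  have hS : S.IsHermitian := by
    simpa only [hR] using isHermitian_conjTranspose_mul_mul R hK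
  have hSv (v : ι → ℂ) : |(star v ⬝ᵥ S *ᵥ v).re| ≤ t * (star v ⬝ᵥ v).re := by
    have hRHR : R * H * R = 1 := by
      rw [← hTT, ← mul_assoc R T T, hRT, one_mul, hTR]
    have := hKH (R *ᵥ v)
    rwa [← hquad, ← hquad, hRHR, one_mulVec] at this
  have hfact : H + I • K = T * (1 + I • S) * T := by
    have hTST : T * S * T = K := by
      simp only [S, ← mul_assoc, hTR, one_mul]
      rw [mul_assoc, hRT, mul_one]
    rw [mul_add, add_mul, mul_one, hTT, Matrix.mul_smul, Matrix.smul_mul, hTST]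
  have hdet : det (H + I • K) = det H * det (1 + I • S) := by
    rw [hfact, det_mul, det_mul, ← hTT, det_mul]
    ring
  rw [hdet, norm_mul, mul_comm]
  gcongr
  exact hS.norm_det_one_add_I_smul_le (hS.abs_eigenvalues_le hSv)

end

noncomputable def matIm {n : ℕ} (A : Matrix (Fin n) (Fin n) ℂ) : Matrix (Fin n) (Fin n) ℂ :=
  (2 * I)⁻¹ • (A - Aᴴ)

section Sector

variable {n : ℕ} {α : ℝ} {A : Matrix (Fin n) (Fin n) ℂ}

theorem dotProduct_matRe_mulVec (A : Matrix (Fin n) (Fin n) ℂ) (x : Fin n → ℂ) :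
    star x ⬝ᵥ matRe A *ᵥ x = ((star x ⬝ᵥ A *ᵥ x).re : ℂ) := by
  rw [matRe, smul_mulVec, add_mulVec, dotProduct_smul, dotProduct_add,
    star_dotProduct_conjTranspose_mulVec, star_def, add_conj]
  simp

theorem dotProduct_matIm_mulVec (A : Matrix (Fin n) (Fin n) ℂ) (x : Fin n → ℂ) :
    star x ⬝ᵥ matIm A *ᵥ x = ((star x ⬝ᵥ A *ᵥ x).im : ℂ) := by
  rw [matIm, smul_mulVec, sub_mulVec, dotProduct_smul, dotProduct_sub,
    star_dotProduct_conjTranspose_mulVec, star_def, sub_conj, smul_eq_mul]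
  push_cast
  field_simp

theorem isHermitian_matRe (A : Matrix (Fin n) (Fin n) ℂ) : (matRe A).IsHermitian := by
  rw [IsHermitian, matRe, conjTranspose_smul, conjTranspose_add, conjTranspose_conjTranspose,
    add_comm]
  simp

theorem isHermitian_matIm (A : Matrix (Fin n) (Fin n) ℂ) : (matIm A).IsHermitian := by
  rw [IsHermitian, matIm, conjTranspose_smul, conjTranspose_sub, conjTranspose_conjTranspose,
    ← neg_sub, smul_neg, ← neg_smul]
  simp

theorem matRe_add_I_smul_matIm (A : Matrix (Fin n) (Fin n) ℂ) : matRe A + I • matIm A = A := by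
  rw [matRe, matIm, smul_smul, show I * (2 * I)⁻¹ = 2⁻¹ by field_simp, ← smul_add,
    add_add_sub_cancel, ← two_smul ℂ A, smul_smul, inv_mul_cancel₀ two_ne_zero, one_smul]

theorem InSector.of_ne_zero (hA : InSector α A) {x : Fin n → ℂ} (hx : x ≠ 0) :
    0 < (star x ⬝ᵥ A *ᵥ x).re ∧
      |(star x ⬝ᵥ A *ᵥ x).im| ≤ Real.tan α * (star x ⬝ᵥ A *ᵥ x).re := by
  have hpos : 0 < star x ⬝ᵥ x := dotProduct_star_self_pos_iff.mpr hx
  set r := ‖star x ⬝ᵥ x‖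
  have hr : 0 < r := norm_pos_iff.mpr hpos.ne'
  set c := (√r)⁻¹
  have hc : 0 < c * c := by positivity
  have hu : star (c • x) ⬝ᵥ (c • x) = 1 := by
    have := star_smul_dotProduct_mulVec_smul 1 c x
    rw [one_mulVec, one_mulVec, eq_coe_norm_of_nonneg hpos.le, real_smul, ← ofReal_mul] at this
    rw [this, ← mul_inv, Real.mul_self_sqrt hr.le, inv_mul_cancel₀ hr.ne', ofReal_one]
  obtain ⟨hre, him⟩ := hA (c • x) hu
  simp only [star_smul_dotProduct_mulVec_smul, smul_re, smul_im, smul_eq_mul, abs_mul,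
    abs_of_pos hc, mul_left_comm (Real.tan α)] at hre him
  exact ⟨pos_of_mul_pos_right hre hc.le, le_of_mul_le_mul_left him hc⟩

theorem InSector.posDef_matRe (hA : InSector α A) : (matRe A).PosDef :=
  .of_dotProduct_mulVec_pos (isHermitian_matRe A) fun x hx => by
    rw [dotProduct_matRe_mulVec]
    exact_mod_cast (hA.of_ne_zero hx).1

theorem InSector.abs_im_le (hA : InSector α A) (x : Fin n → ℂ) :
    |(star x ⬝ᵥ A *ᵥ x).im| ≤ Real.tan α * (star x ⬝ᵥ A *ᵥ x).re := by
  rcases eq_or_ne x 0 with rfl | hx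
  · simp
  · exact (hA.of_ne_zero hx).2

theorem InSector.re_det_matRe_pos (hA : InSector α A) : 0 < (matRe A).det.re :=
  (Complex.pos_iff.mp hA.posDef_matRe.det_pos).1

theorem InSector.norm_det_le (hcos : 0 < Real.cos α) (hA : InSector α A) :
    ‖A.det‖ ≤ (Real.cos α)⁻¹ ^ n * (matRe A).det.re := by
  have hsec : √(1 + Real.tan α ^ 2) = (Real.cos α)⁻¹ := by
    rw [← inv_inv (1 + _), Real.inv_one_add_tan_sq hcos.ne', Real.sqrt_inv, Real.sqrt_sq hcos.le]
  have hdet : ‖(matRe A).det‖ = (matRe A).det.re :=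
    (Complex.re_eq_norm.mpr hA.posDef_matRe.det_pos.le).symm
  have := hA.posDef_matRe.norm_det_add_I_smul_le (isHermitian_matIm A) (t := Real.tan α)
    fun v => by simpa [dotProduct_matRe_mulVec, dotProduct_matIm_mulVec] using hA.abs_im_le v
  rwa [matRe_add_I_smul_matIm, hsec, Fintype.card_fin, hdet] at this

end Sector

noncomputable def harmonicMean (a b : ℝ) : ℝ := 2 * a * b / (a + b)

theorem harmonicMean_le_harmonicMean {a b p q : ℝ} (ha : 0 ≤ a) (hb : 0 ≤ b) (hp : 0 < p)
    (hq : 0 < q) (hap : a ≤ p) (hbq : b ≤ q) : harmonicMean a b ≤ harmonicMean p q := by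
  unfold harmonicMean
  rcases (add_nonneg ha hb).eq_or_lt with hab | hab
  · rw [← hab, div_zero]
    positivity
  · rw [div_le_div_iff₀ hab (by positivity)]
    nlinarith [mul_le_mul_of_nonneg_left hbq (mul_nonneg ha hp.le),
      mul_le_mul_of_nonneg_left hap (mul_nonneg hb hq.le)]

theorem harmonicMean_mul_mul (c a b : ℝ) :
    harmonicMean (c * a) (c * b) = c * harmonicMean a b := by
  unfold harmonicMean
  rcases eq_or_ne c 0 with rfl | hc
  · simp
  · rw [← mul_add, show 2 * (c * a) * (c * b) = c * (c * (2 * a * b)) by ring,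
      mul_div_mul_left _ _ hc, mul_div_assoc]

/-- For sector matrices `A, B` of angle `α ∈ [0, π/2)`, the harmonic mean of `|det A|`
and `|det B|` is at most `secⁿ(α)` times the harmonic mean of `det(Re A)` and `det(Re B)`. -/
theorem stmt6 {n : ℕ} {α : ℝ} (hα : α ∈ Set.Ico 0 (Real.pi / 2))
    {A B : Matrix (Fin n) (Fin n) ℂ} (hA : InSector α A) (hB : InSector α B) :
    2 * ‖A.det‖ * ‖B.det‖ / (‖A.det‖ + ‖B.det‖) ≤
      (Real.cos α)⁻¹ ^ n *
        (2 * (matRe A).det.re * (matRe B).det.re / ((matRe A).det.re + (matRe B).det.re)) := by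
  have hcos : 0 < Real.cos α :=
    Real.cos_pos_of_mem_Ioo ⟨by linarith [hα.1, Real.pi_pos], hα.2⟩
  calc harmonicMean ‖A.det‖ ‖B.det‖
      ≤ harmonicMean ((Real.cos α)⁻¹ ^ n * (matRe A).det.re)
          ((Real.cos α)⁻¹ ^ n * (matRe B).det.re) :=
        harmonicMean_le_harmonicMean (norm_nonneg _) (norm_nonneg _)
          (by have := hA.re_det_matRe_pos; positivity) (by have := hB.re_det_matRe_pos; positivity)
          (hA.norm_det_le hcos) (hB.norm_det_le hcos)
    _ = _ := harmonicMean_mul_mul _ _ _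
end

section
/- Let α ∈ [0, π/2), let A ∈ M_n(ℂ) be a sector matrix of angle α with 0 < m·I_n ≤ Re A ≤ M·I_n for some 0 < m ≤ M, and set h = M/m. Then for every normalized positive linear map Φ : M_n(ℂ) → M_l(ℂ), one has (Φ((Re A)^{-1}))² ≤ sec⁴(α)·K(h)·(Φ(Re(A^{-1})))² in the Loewner order. -/
open Matrix
open scoped ComplexOrder

/-- The Kantorovich constant `K(x) = (x+1)²/(4x)`. -/
noncomputable def kant (x : ℝ) : ℝ := (x + 1) ^ 2 / (4 * x)

/-!
Write `R = Re A` and `S = Im A`. The sector condition says `-tan α • R ≤ S ≤ tan α • R`;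
conjugating by `R^{-1/2}` turns this into `-tan α ≤ T ≤ tan α` for `T = R^{-1/2} S R^{-1/2}`,
so `S R⁻¹ S ≤ tan² α • R`. Since `A R⁻¹ A* = R + S R⁻¹ S` and `Re (A⁻¹) = A⁻¹ R A⁻*`,
conjugating by `A⁻¹` gives `R⁻¹ ≤ sec² α • Re (A⁻¹)`. Applying `Φ`, the operator
`X = Φ (R⁻¹)` satisfies `M⁻¹ ≤ X ≤ m⁻¹` and `X ≤ Y := sec² α • Φ (Re (A⁻¹))`, and for such
`X`, `Y` the inequality `X² ≤ K(M/m) Y²` comes from writing `K Y² - X²` as a sum of three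
nonnegative terms.
-/

-- The L2 operator norm makes square complex matrices a C⋆-algebra, so that the `CStarAlgebra`
-- lemmas below apply to them with the Loewner order.
open scoped Ring ComplexStarModule MatrixOrder Matrix.Norms.L2Operator

lemma Ring.inverse_algebraMap {R A : Type*} [Semifield R] [Semiring A] [Algebra R A] {r : R}
    (hr : r ≠ 0) : (algebraMap R A r)⁻¹ʳ = algebraMap R A r⁻¹ :=
  Ring.inverse_unit ⟨_, _, by rw [← map_mul, mul_inv_cancel₀ hr, map_one],
    by rw [← map_mul, inv_mul_cancel₀ hr, map_one]⟩

section ComplexStarAlgebra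

variable {A : Type*} [Ring A] [StarRing A] [Algebra ℂ A] [StarModule ℂ A]

lemma realPart_ringInverse {a : A} (ha : IsUnit a) :
    (ℜ a⁻¹ʳ : A) = a⁻¹ʳ * ℜ a * star a⁻¹ʳ := by
  rw [realPart_apply_coe, realPart_apply_coe, ← Ring.inverse_star, mul_smul_comm, smul_mul_assoc,
    mul_add, add_mul, Ring.inverse_mul_cancel _ ha, one_mul, mul_assoc,
    Ring.mul_inverse_cancel _ ha.star, mul_one, add_comm]

lemma mul_ringInverse_realPart_mul_star {a : A} (ha : IsUnit (ℜ a : A)) :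
    a * (ℜ a : A)⁻¹ʳ * star a = ℜ a + ℑ a * (ℜ a : A)⁻¹ʳ * ℑ a := by
  set r : A := (ℜ a : A)
  set s : A := (ℑ a : A)
  have ha' : a = r + Complex.I • s := (realPart_add_I_smul_imaginaryPart a).symm
  have hstar : star a = r - Complex.I • s := by
    rw [ha', star_add, star_smul, selfAdjoint.star_val_eq, selfAdjoint.star_val_eq,
      Complex.star_def, Complex.conj_I, neg_smul, ← sub_eq_add_neg]
  rw [hstar, ha']
  simp only [add_mul, mul_sub, smul_mul_assoc, mul_smul_comm, Ring.mul_inverse_cancel _ ha,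
    one_mul, Ring.inverse_mul_cancel_right _ _ ha, smul_add, smul_smul, Complex.I_mul_I,
    neg_one_smul]
  abel

end ComplexStarAlgebra

namespace CStarAlgebra

variable {A : Type*} [CStarAlgebra A] [PartialOrder A] [StarOrderedRing A]

lemma ringInverse_le_algebraMap_inv {r : ℝ} (hr : 0 < r) {x : A} (h : algebraMap ℝ A r ≤ x) :
    x⁻¹ʳ ≤ algebraMap ℝ A r⁻¹ := by
  rw [← Ring.inverse_algebraMap hr.ne']
  exact ringInverse_le_ringInverse h (isStrictlyPositive_algebraMap hr)

lemma algebraMap_inv_le_ringInverse {r : ℝ} (hr : 0 < r) {x : A} (hx : IsStrictlyPositive x)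
    (h : x ≤ algebraMap ℝ A r) : algebraMap ℝ A r⁻¹ ≤ x⁻¹ʳ := by
  rw [← Ring.inverse_algebraMap hr.ne']
  exact ringInverse_le_ringInverse h hx

lemma sq_le_algebraMap_sq' {t : ℝ} {x : A} (h₁ : -algebraMap ℝ A t ≤ x)
    (h₂ : x ≤ algebraMap ℝ A t) : x ^ 2 ≤ algebraMap ℝ A (t ^ 2) := by
  have hcomm : Commute (algebraMap ℝ A t - x) (algebraMap ℝ A t + x) :=
    (Algebra.commute_algebraMap_left t _).sub_left
      ((Algebra.commute_algebraMap_right t x).add_right (Commute.refl x))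
  have hprod := hcomm.mul_nonneg (sub_nonneg.2 h₂) (neg_le_iff_add_nonneg'.1 h₁)
  rw [← sub_nonneg]
  convert hprod using 1
  rw [map_pow, sub_mul, mul_add, mul_add, Algebra.commutes t x]
  noncomm_ring

open CFC in
lemma mul_ringInverse_mul_le {r s : A} (hr : IsStrictlyPositive r) {t : ℝ}
    (h₁ : -(t • r) ≤ s) (h₂ : s ≤ t • r) : s * r⁻¹ʳ * s ≤ (t ^ 2) • r := by
  set T := conjSqrt r⁻¹ʳ s
  have hr' : conjSqrt r⁻¹ʳ (t • r) = algebraMap ℝ A t := by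
    rw [map_smul, conjSqrt_ringInverse_self r, Algebra.algebraMap_eq_smul_one]
  have hT : T ^ 2 ≤ algebraMap ℝ A (t ^ 2) := by
    apply sq_le_algebraMap_sq'
    · simpa only [map_neg, hr'] using conjSqrt_le_conjSqrt (c := r⁻¹ʳ) h₁
    · simpa only [hr'] using conjSqrt_le_conjSqrt (c := r⁻¹ʳ) h₂
  have hsr : sqrt r * r⁻¹ʳ * sqrt r = 1 := by
    have := conjSqrt_ringInverse_self r⁻¹ʳ hr.ringInverse
    rwa [Ring.inverse_inverse hr.isUnit, conjSqrt_apply] at this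
  calc s * r⁻¹ʳ * s = conjSqrt r (T ^ 2) := by
        rw [← conjSqrt_conjSqrt_ringInverse r s]
        simp only [conjSqrt_apply, sq]
        calc sqrt r * T * sqrt r * r⁻¹ʳ * (sqrt r * T * sqrt r)
            = sqrt r * T * (sqrt r * r⁻¹ʳ * sqrt r) * T * sqrt r := by simp only [mul_assoc]
          _ = sqrt r * (T * T) * sqrt r := by rw [hsr, mul_one, mul_assoc (sqrt r)]
    _ ≤ conjSqrt r (algebraMap ℝ A (t ^ 2)) := conjSqrt_le_conjSqrt hT
    _ = (t ^ 2) • r := by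
        rw [Algebra.algebraMap_eq_smul_one, map_smul, conjSqrt_one r hr.nonneg]

lemma ringInverse_realPart_le {a : A} (ha : IsUnit a) (hr : IsStrictlyPositive (ℜ a : A))
    {t : ℝ} (h₁ : -(t • (ℜ a : A)) ≤ ℑ a) (h₂ : (ℑ a : A) ≤ t • ℜ a) :
    (ℜ a : A)⁻¹ʳ ≤ (1 + t ^ 2) • (ℜ a⁻¹ʳ : A) := by
  calc (ℜ a : A)⁻¹ʳ = a⁻¹ʳ * (a * (ℜ a : A)⁻¹ʳ * star a) * star a⁻¹ʳ := by
        rw [← Ring.inverse_star, mul_assoc, mul_assoc, Ring.mul_inverse_cancel _ ha.star, mul_one,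
          Ring.inverse_mul_cancel_left _ _ ha]
    _ = a⁻¹ʳ * (ℜ a + ℑ a * (ℜ a : A)⁻¹ʳ * ℑ a) * star a⁻¹ʳ := by
        rw [mul_ringInverse_realPart_mul_star hr.isUnit]
    _ ≤ a⁻¹ʳ * ((1 + t ^ 2) • (ℜ a : A)) * star a⁻¹ʳ := by
        refine star_right_conjugate_le_conjugate ?_ _
        rw [add_smul, one_smul]
        exact add_le_add_right (mul_ringInverse_mul_le hr h₁ h₂) _
    _ = (1 + t ^ 2) • (ℜ a⁻¹ʳ : A) := by
        rw [realPart_ringInverse ha, mul_smul_comm, smul_mul_assoc]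

/-- The identity behind this bound is
`K y² - x² = (4ab)⁻¹ ((a + b) y - 2ab)² + (a + b) (y - x) + (x - a) (b - x)`
with `K = (a + b)² / (4ab) = kant (b / a)`. -/
lemma sq_le_kant_smul_sq {a b : ℝ} (ha : 0 < a) (hb : 0 < b) {x y : A}
    (hax : algebraMap ℝ A a ≤ x) (hxb : x ≤ algebraMap ℝ A b) (hxy : x ≤ y) :
    x ^ 2 ≤ kant (b / a) • y ^ 2 := by
  have hy : IsSelfAdjoint y := .of_nonneg ((algebraMap_nonneg A ha.le).trans (hax.trans hxy))
  have h₁ : 0 ≤ (4 * a * b)⁻¹ • ((a + b) • y - algebraMap ℝ A (2 * a * b)) ^ 2 :=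
    smul_nonneg (by positivity)
      (((IsSelfAdjoint.all (a + b)).smul hy).sub (.algebraMap A (.all _))).sq_nonneg
  have h₂ : 0 ≤ (a + b) • (y - x) := smul_nonneg (by positivity) (sub_nonneg.2 hxy)
  have h₃ : 0 ≤ (x - algebraMap ℝ A a) * (algebraMap ℝ A b - x) :=
    Commute.mul_nonneg (sub_nonneg.2 hax) (sub_nonneg.2 hxb)
      ((Algebra.commute_algebraMap_right b _).sub_right
        ((Commute.refl x).sub_left (Algebra.commute_algebraMap_left a x)))
  have key : kant (b / a) • y ^ 2 - x ^ 2
      = (4 * a * b)⁻¹ • ((a + b) • y - algebraMap ℝ A (2 * a * b)) ^ 2 + (a + b) • (y - x)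
        + (x - algebraMap ℝ A a) * (algebraMap ℝ A b - x) := by
    simp only [Algebra.algebraMap_eq_smul_one, sq, sub_mul, mul_sub, smul_mul_assoc,
      mul_smul_comm, one_mul, mul_one, smul_sub, smul_smul]
    unfold kant
    match_scalars <;> field_simp <;> ring
  rw [← sub_nonneg, key]
  exact add_nonneg (add_nonneg h₁ h₂) h₃

end CStarAlgebra

lemma matRe_eq_realPart {n : ℕ} (A : Matrix (Fin n) (Fin n) ℂ) : matRe A = ℜ A := by
  rw [matRe, realPart_apply_coe, ← Complex.coe_smul]
  norm_num
  rfl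

namespace Matrix

variable {ι : Type*} [Fintype ι]

lemma star_dotProduct_conjTranspose_mulVec_s12 (A : Matrix ι ι ℂ) (x : ι → ℂ) :
    star x ⬝ᵥ Aᴴ *ᵥ x = star (star x ⬝ᵥ A *ᵥ x) := by
  rw [← star_dotProduct, star_mulVec, ← dotProduct_mulVec]

lemma star_dotProduct_realPart_mulVec (A : Matrix ι ι ℂ) (x : ι → ℂ) :
    star x ⬝ᵥ (ℜ A : Matrix ι ι ℂ) *ᵥ x = (star x ⬝ᵥ A *ᵥ x).re := by
  rw [realPart_apply_coe, Complex.re_eq_add_conj, ← Complex.coe_smul, smul_mulVec, add_mulVec,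
    dotProduct_smul, dotProduct_add, star_eq_conjTranspose, star_dotProduct_conjTranspose_mulVec_s12,
    Complex.star_def, smul_eq_mul, div_eq_inv_mul]
  norm_num

lemma star_dotProduct_imaginaryPart_mulVec (A : Matrix ι ι ℂ) (x : ι → ℂ) :
    star x ⬝ᵥ (ℑ A : Matrix ι ι ℂ) *ᵥ x = (star x ⬝ᵥ A *ᵥ x).im := by
  rw [imaginaryPart_apply_coe, Complex.im_eq_sub_conj, ← Complex.coe_smul, smul_mulVec,
    smul_mulVec, sub_mulVec, dotProduct_smul, dotProduct_smul, dotProduct_sub,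
    star_eq_conjTranspose, star_dotProduct_conjTranspose_mulVec_s12, Complex.star_def, smul_eq_mul,
    smul_eq_mul]
  push_cast
  field_simp
  linear_combination (-(star x ⬝ᵥ A *ᵥ x - (starRingEnd ℂ) (star x ⬝ᵥ A *ᵥ x))) * Complex.I_sq

lemma isUnit_of_posDef_realPart [DecidableEq ι] {A : Matrix ι ι ℂ}
    (h : (ℜ A : Matrix ι ι ℂ).PosDef) : IsUnit A := by
  refine mulVec_injective_iff_isUnit.1 fun x y hxy => ?_
  by_contra hne
  have := h.dotProduct_mulVec_pos (sub_ne_zero.2 hne)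
  rw [star_dotProduct_realPart_mulVec, mulVec_sub, hxy, sub_self, dotProduct_zero] at this
  simp at this

end Matrix

namespace InSector

variable {n : ℕ} {α : ℝ} {A : Matrix (Fin n) (Fin n) ℂ}

lemma abs_im_le_s12 (hA : InSector α A) (x : Fin n → ℂ) :
    |(star x ⬝ᵥ A *ᵥ x).im| ≤ Real.tan α * (star x ⬝ᵥ A *ᵥ x).re := by
  rcases eq_or_ne x 0 with rfl | hx
  · simp
  set c : ℝ := (star x ⬝ᵥ x).re
  have hc : (c : ℂ) = star x ⬝ᵥ x :=
    Complex.ext rfl (Complex.nonneg_iff.1 (dotProduct_star_self_nonneg x)).2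
  have hc0 : 0 < c := by
    rw [← Complex.zero_lt_real, hc]
    exact dotProduct_star_self_pos_iff.2 hx
  have hscale (B : Matrix (Fin n) (Fin n) ℂ) :
      star ((√c)⁻¹ • x) ⬝ᵥ B *ᵥ ((√c)⁻¹ • x) = c⁻¹ • (star x ⬝ᵥ B *ᵥ x) := by
    rw [star_smul, star_trivial, mulVec_smul, dotProduct_smul, smul_dotProduct, smul_smul,
      ← mul_inv, Real.mul_self_sqrt hc0.le]
  have hunit : star ((√c)⁻¹ • x) ⬝ᵥ ((√c)⁻¹ • x) = 1 := by
    have := hscale 1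
    rwa [one_mulVec, one_mulVec, ← hc, Complex.real_smul, ← Complex.ofReal_mul,
      inv_mul_cancel₀ hc0.ne', Complex.ofReal_one] at this
  obtain ⟨-, h⟩ := hA _ hunit
  rw [hscale, Complex.smul_re, Complex.smul_im, smul_eq_mul, smul_eq_mul, abs_mul,
    abs_of_pos (inv_pos.2 hc0), mul_left_comm] at h
  exact le_of_mul_le_mul_left h (inv_pos.2 hc0)

lemma imaginaryPart_mem_Icc (hA : InSector α A) :
    (ℑ A : Matrix (Fin n) (Fin n) ℂ) ∈
      Set.Icc (-(Real.tan α • (ℜ A : Matrix _ _ ℂ))) (Real.tan α • (ℜ A : Matrix _ _ ℂ)) := by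
  have hR : IsSelfAdjoint (Real.tan α • (ℜ A : Matrix (Fin n) (Fin n) ℂ)) :=
    (IsSelfAdjoint.all _).smul (ℜ A).2
  have hform (x : Fin n → ℂ) (ε : ℝ) :
      star x ⬝ᵥ (Real.tan α • (ℜ A : Matrix (Fin n) (Fin n) ℂ) + ε • (ℑ A : Matrix _ _ ℂ)) *ᵥ x =
        ((Real.tan α * (star x ⬝ᵥ A *ᵥ x).re + ε * (star x ⬝ᵥ A *ᵥ x).im : ℝ) : ℂ) := by
    rw [add_mulVec, smul_mulVec, smul_mulVec, dotProduct_add, dotProduct_smul, dotProduct_smul,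
      Matrix.star_dotProduct_realPart_mulVec, Matrix.star_dotProduct_imaginaryPart_mulVec]
    simp [Complex.real_smul]
  constructor
  · refine Matrix.le_iff.2 (Matrix.PosSemidef.of_dotProduct_mulVec_nonneg ?_ fun x => ?_)
    · exact (ℑ A).2.sub hR.neg
    · have := hform x 1
      rw [one_smul] at this
      rw [sub_neg_eq_add, add_comm, this, Complex.zero_le_real]
      linarith [abs_le.1 (hA.abs_im_le_s12 x)]
  · refine Matrix.le_iff.2 (Matrix.PosSemidef.of_dotProduct_mulVec_nonneg ?_ fun x => ?_)
    · exact hR.sub (ℑ A).2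
    · have := hform x (-1)
      rw [neg_one_smul, ← sub_eq_add_neg] at this
      rw [this, Complex.zero_le_real]
      linarith [abs_le.1 (hA.abs_im_le_s12 x)]

lemma inv_matRe_le (hA : InSector α A) (hα : Real.cos α ≠ 0) (hR : (matRe A).PosDef) :
    (matRe A)⁻¹ ≤ (Real.cos α)⁻¹ ^ 2 • matRe A⁻¹ := by
  rw [matRe_eq_realPart] at hR
  have hsec : 1 + Real.tan α ^ 2 = (Real.cos α)⁻¹ ^ 2 := by
    rw [inv_pow, ← Real.inv_one_add_tan_sq hα, inv_inv]
  rw [matRe_eq_realPart, matRe_eq_realPart, Matrix.nonsing_inv_eq_ringInverse,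
    Matrix.nonsing_inv_eq_ringInverse, ← hsec]
  exact CStarAlgebra.ringInverse_realPart_le (Matrix.isUnit_of_posDef_realPart hR)
    (Matrix.isStrictlyPositive_iff_posDef.2 hR) hA.imaginaryPart_mem_Icc.1
    hA.imaginaryPart_mem_Icc.2

end InSector

lemma LinearMap.monotone_of_map_posSemidef {ι κ : Type*} [Fintype ι] [Fintype κ]
    {Φ : Matrix ι ι ℂ →ₗ[ℂ] Matrix κ κ ℂ} (hΦ : ∀ X, X.PosSemidef → (Φ X).PosSemidef) :
    Monotone Φ := fun X Y h => by
  simpa only [Matrix.le_iff, map_sub] using hΦ _ (Matrix.le_iff.1 h)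

/-- For a sector matrix `A` of angle `α ∈ [0, π/2)` with `0 < m·I ≤ Re A ≤ M·I`, `h = M/m`,
and every normalized positive linear map `Φ`,
`(Φ((Re A)⁻¹))² ≤ sec⁴(α)K(h)(Φ(Re(A⁻¹)))²` in the Loewner order. -/
theorem stmt12 {n l : ℕ} {α : ℝ} (hα : α ∈ Set.Ico 0 (Real.pi / 2))
    {A : Matrix (Fin n) (Fin n) ℂ} (hA : InSector α A)
    {m M : ℝ} (hm : 0 < m) (hmM : m ≤ M)
    (h1 : (matRe A - m • 1).PosSemidef)
    (h2 : (M • (1 : Matrix (Fin n) (Fin n) ℂ) - matRe A).PosSemidef)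
    (Φ : Matrix (Fin n) (Fin n) ℂ →ₗ[ℂ] Matrix (Fin l) (Fin l) ℂ)
    (hΦpos : ∀ X : Matrix (Fin n) (Fin n) ℂ, X.PosSemidef → (Φ X).PosSemidef)
    (hΦ1 : Φ 1 = 1) :
    (((Real.cos α)⁻¹ ^ 4 * kant (M / m)) • Φ (matRe A⁻¹) ^ 2 -
      Φ ((matRe A)⁻¹) ^ 2).PosSemidef := by
  have hM : 0 < M := hm.trans_le hmM
  have hcos : Real.cos α ≠ 0 :=
    (Real.cos_pos_of_mem_Ioo ⟨by linarith [hα.1, Real.pi_pos], hα.2⟩).ne'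
  rw [← Algebra.algebraMap_eq_smul_one, ← Matrix.le_iff] at h1 h2
  have hR : IsStrictlyPositive (matRe A) := (isStrictlyPositive_algebraMap hm).of_le h1
  have hΦmono := LinearMap.monotone_of_map_posSemidef hΦpos
  have hΦalg (r : ℝ) : Φ (algebraMap ℝ _ r) = algebraMap ℝ _ r := by
    rw [Algebra.algebraMap_eq_smul_one, Φ.map_smul_of_tower, hΦ1, Algebra.algebraMap_eq_smul_one]
  have hX₁ := hΦalg M⁻¹ ▸ hΦmono (CStarAlgebra.algebraMap_inv_le_ringInverse hM hR h2)
  have hX₂ := hΦalg m⁻¹ ▸ hΦmono (CStarAlgebra.ringInverse_le_algebraMap_inv hm h1)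
  have hXY := Φ.map_smul_of_tower ((Real.cos α)⁻¹ ^ 2) _ ▸
    hΦmono (hA.inv_matRe_le hcos (Matrix.isStrictlyPositive_iff_posDef.1 hR))
  rw [Matrix.nonsing_inv_eq_ringInverse (matRe A)] at hXY ⊢
  have := CStarAlgebra.sq_le_kant_smul_sq (inv_pos.2 hM) (inv_pos.2 hm) hX₁ hX₂ hXY
  rw [inv_div_inv, smul_pow, smul_smul, ← pow_mul, mul_comm] at this
  exact Matrix.le_iff.1 this
end
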